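/- Let τ be a unit quaternion (‖τ‖ = 1). Then for all quaternions h, r, t: (h ⊗ (τ ⊗ r ⊗ conj(τ))) · t = (t ⊗ (τ ⊗ conj(r) ⊗ conj(τ))) · h. (Inverse relation pattern for the full time-aware model: the TQuatE score of (h, r, t) at timestamp τ equals the score of (t, conj(r), h) at the same timestamp.) -/

import Mathlib

open Quaternion

/-- The dot product of two quaternions: the sum of the products of their
real and three imaginary components. -/
noncomputable def qdot (q₁ q₂ : ℍ[ℝ]) : ℝ :=
  q₁.re * q₂.re + q₁.imI * q₂.imI + q₁.imJ * q₂.imJ + q₁.imK * q₂.imK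

theorem qdot_eq_re_mul_star (a b : ℍ[ℝ]) : qdot a b = (a * star b).re := by
  simp only [qdot, Quaternion.re_mul, Quaternion.re_star, Quaternion.imI_star,
    Quaternion.imJ_star, Quaternion.imK_star]
  ring

/-- Conjugation does not change the real part, and `star (h * q * star t) = t * star q * star h`. -/
theorem qdot_mul_left_eq_qdot_mul_star (h q t : ℍ[ℝ]) : qdot (h * q) t = qdot (t * star q) h := by
  rw [qdot_eq_re_mul_star, qdot_eq_re_mul_star, ← Quaternion.re_star]
  simp only [star_mul, star_star, mul_assoc]

theorem star_mul_mul_star {R : Type*} [Semigroup R] [StarMul R] (a b : R) :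
    star (a * b * star a) = a * star b * star a := by
  simp only [star_mul, star_star, mul_assoc]

theorem inverse_pattern_time_aware_general (τ : ℍ[ℝ]) (h r t : ℍ[ℝ]) :
    qdot (h * (τ * r * star τ)) t = qdot (t * (τ * star r * star τ)) h := by
  rw [qdot_mul_left_eq_qdot_mul_star, star_mul_mul_star]

theorem inverse_pattern_time_aware (τ : ℍ[ℝ]) (hτ : ‖τ‖ = 1) (h r t : ℍ[ℝ]) :
    qdot (h * (τ * r * star τ)) t = qdot (t * (τ * star r * star τ)) h :=
  inverse_pattern_time_aware_general τ h r t
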